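/- arXiv:1901.02636 — 4 statements merged into one kernel-verified Lean document; each statement's English description precedes it below -/
import Mathlib

section
/- Let G = (V,E) be a distributed computing network, let s,t ∈ V, and let S ⊆ E ∪ V be a joint communication and computation cut for (s,t), i.e., every computation path (P,w) from s to t either uses some link in S ∩ E or has its computation node w ∈ S ∩ V. Then in the layered graph of G, after deleting the edge set S' = {(u,v), (u',v') : (u,v) ∈ S ∩ E} ∪ {(w,w') : w ∈ S ∩ V}, there is no directed path from s (in the upper layer) to t' (the lower-layer copy of t). -/
open Finset

variable {V : Type} [Fintype V] [DecidableEq V]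

/-- A computation path from `s` to `t` in the directed graph with link set `E`:
a directed walk (a nonempty list of nodes whose consecutive pairs are links of `E`)
starting at `s` and ending at `t`, together with a designated processing node `proc`
lying on the walk. -/
structure CompPath (E : Finset (V × V)) (s t : V) : Type where
  walk : List V
  proc : V
  walk_ne : walk ≠ []
  head_eq : walk.head? = some s
  last_eq : walk.getLast? = some t
  chain : walk.Chain' fun u v => (u, v) ∈ E
  proc_mem : proc ∈ walk

namespace CompPath

/-- The list of links traversed by a computation path, with multiplicity. -/
def links {E : Finset (V × V)} {s t : V} (p : CompPath E s t) : List (V × V) :=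
  p.walk.zip p.walk.tail

end CompPath

/-- `x` is a feasible `s`–`t` flow in the computing network `(E, μE, μV)`:
a nonnegative, finitely supported assignment of values to computation paths such that
every link `e ∈ E` carries (with multiplicity) at most `μE e` total flow and every node
`w` processes at most `μV w` total flow. -/
def IsFlow (E : Finset (V × V)) (μE : V × V → ℝ) (μV : V → ℝ) (s t : V)
    (x : CompPath E s t →₀ ℝ) : Prop :=
  (∀ p, 0 ≤ x p) ∧
  (∀ e ∈ E, ∑ p ∈ x.support, x p * (p.links.count e : ℝ) ≤ μE e) ∧
  (∀ w : V, ∑ p ∈ x.support, (if p.proc = w then x p else 0) ≤ μV w)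

/-- The total value of a flow. -/
def flowValue (E : Finset (V × V)) (s t : V) (x : CompPath E s t →₀ ℝ) : ℝ :=
  ∑ p ∈ x.support, x p

/-- The maximum `s`–`t` flow of the computing network `(E, μE, μV)`. -/
noncomputable def maxFlow (E : Finset (V × V)) (μE : V × V → ℝ) (μV : V → ℝ)
    (s t : V) : ℝ :=
  sSup {F | ∃ x, IsFlow E μE μV s t x ∧ F = flowValue E s t x}

/-- A communication cut for `(s, t)`: a set of links `Ec ⊆ E` such that every
computation path from `s` to `t` whose processing node has positive processing
capacity uses some link of `Ec`. -/
def IsCommCut (E : Finset (V × V)) (μV : V → ℝ) (s t : V) (Ec : Finset (V × V)) : Prop :=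
  Ec ⊆ E ∧ ∀ p : CompPath E s t, 0 < μV p.proc → ∃ e ∈ Ec, e ∈ p.links

/-- A computation cut for `(s, t)`: a set of nodes `Vc` such that every computation
path from `s` to `t` whose processing node has positive processing capacity has its
processing node in `Vc`. -/
def IsCompCut (E : Finset (V × V)) (μV : V → ℝ) (s t : V) (Vc : Finset V) : Prop :=
  ∀ p : CompPath E s t, 0 < μV p.proc → p.proc ∈ Vc

/-- A joint communication and computation cut for `(s, t)`. -/
def IsJointCut (E : Finset (V × V)) (μV : V → ℝ) (s t : V)
    (Ec : Finset (V × V)) (Vc : Finset V) : Prop :=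
  Ec ⊆ E ∧
    ∀ p : CompPath E s t, 0 < μV p.proc → (∃ e ∈ Ec, e ∈ p.links) ∨ p.proc ∈ Vc

/-- The value of a joint cut. -/
def jointCutValue (μE : V × V → ℝ) (μV : V → ℝ) (Ec : Finset (V × V)) (Vc : Finset V) : ℝ :=
  ∑ e ∈ Ec, μE e + ∑ w ∈ Vc, μV w

/-- The minimum value of a joint communication and computation cut for `(s, t)`. -/
noncomputable def minJointCutValue (E : Finset (V × V)) (μE : V × V → ℝ) (μV : V → ℝ)
    (s t : V) : ℝ :=
  sInf {c | ∃ Ec Vc, IsJointCut E μV s t Ec Vc ∧ c = jointCutValue μE μV Ec Vc}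

/-- The edge set of the layered graph of `(V, E)`: a copy of each link in each of the
two layers (`Sum.inl` is the upper layer, `Sum.inr` the lower layer), plus a crossing
edge `(w, w')` for each node `w`. -/
def layerEdges (E : Finset (V × V)) : Finset ((V ⊕ V) × (V ⊕ V)) :=
  (E.image fun e => (Sum.inl e.1, Sum.inl e.2)) ∪
    (E.image fun e => (Sum.inr e.1, Sum.inr e.2)) ∪
    ((univ : Finset V).image fun w => (Sum.inl w, Sum.inr w))

/-- `a` is connected to `b` by a directed path in the layered graph after deleting
the edge set `C`. -/
def LConnected (E : Finset (V × V)) (C : Finset ((V ⊕ V) × (V ⊕ V))) (a b : V ⊕ V) : Prop :=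
  Relation.ReflTransGen (fun u v => (u, v) ∈ layerEdges E \ C) a b

/-- Costs (capacities) of layered-graph edges: each of the two copies of a link
`(u, v)` gets cost `μE (u, v)`, and the crossing edge `(w, w')` gets cost `κ w`. -/
def lcost (μE : V × V → ℝ) (κ : V → ℝ) : (V ⊕ V) × (V ⊕ V) → ℝ
  | (Sum.inl u, Sum.inl v) => μE (u, v)
  | (Sum.inr u, Sum.inr v) => μE (u, v)
  | (Sum.inl u, Sum.inr v) => if u = v then κ u else 0
  | (Sum.inr _, Sum.inl _) => 0

/-- Reachability along directed links of `E`. -/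
def Reach (E : Finset (V × V)) (a b : V) : Prop :=
  Relation.ReflTransGen (fun u v => (u, v) ∈ E) a b

/-!
A path from `s` to `t'` in the layered graph can change layers only once, along a crossing
edge `(w, w')`, since no edge leads back up. Projected to `G`, it is a walk from `s` through
`w` to `t` that avoids the links of `SE`, and `w ∉ SV`; processed at `w`, this walk is a
computation path that the cut misses.
-/

theorem List.IsChain.rel_of_mem_zip_tail {α : Type*} {R : α → α → Prop} {l : List α}
    (h : l.IsChain R) {p : α × α} (hp : p ∈ l.zip l.tail) : R p.1 p.2 := by
  induction l using List.twoStepInduction with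
  | nil | singleton => simp at hp
  | cons_cons a b l _ ih =>
    rw [List.isChain_cons_cons] at h
    simp only [List.tail_cons, List.zip_cons_cons, List.mem_cons] at hp
    rcases hp with rfl | hp
    · exact h.1
    · exact ih b h.2 hp

theorem List.exists_isChain_through_of_reflTransGen {α : Type*} {r : α → α → Prop} {a b c : α}
    (hab : Relation.ReflTransGen r a b) (hbc : Relation.ReflTransGen r b c) :
    ∃ l : List α, l.head? = some a ∧ l.getLast? = some c ∧ l.IsChain r ∧ b ∈ l := by
  induction hab using Relation.ReflTransGen.head_induction_on with
  | refl =>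
    obtain ⟨l, hchain, hlast⟩ := List.exists_isChain_cons_of_relationReflTransGen hbc
    exact ⟨b :: l, rfl, hlast ▸ List.getLast?_eq_some_getLast _, hchain, List.mem_cons_self⟩
  | head hstep _ ih =>
    obtain ⟨l, hhead, hlast, hchain, hmem⟩ := ih
    refine ⟨_ :: l, rfl, by simp [List.getLast?_cons, hlast], ?_, List.mem_cons_of_mem _ hmem⟩
    exact List.isChain_cons.2 ⟨by simpa [hhead] using hstep, hchain⟩

/-- The edge set `S'` of the layered graph induced by a joint cut `(SE, SV)`. -/
def layerCut (SE : Finset (V × V)) (SV : Finset V) : Finset ((V ⊕ V) × (V ⊕ V)) :=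
  (SE.image fun e => (Sum.inl e.1, Sum.inl e.2)) ∪
    (SE.image fun e => (Sum.inr e.1, Sum.inr e.2)) ∪
    (SV.image fun w => (Sum.inl w, Sum.inr w))

section LayerCut

variable {E SE : Finset (V × V)} {SV : Finset V} {u v : V}

theorem inl_inl_mem_layerEdges_sdiff :
    (Sum.inl u, Sum.inl v) ∈ layerEdges E \ layerCut SE SV ↔ (u, v) ∈ E \ SE := by
  simp [layerEdges, layerCut]

theorem inr_inr_mem_layerEdges_sdiff :
    (Sum.inr u, Sum.inr v) ∈ layerEdges E \ layerCut SE SV ↔ (u, v) ∈ E \ SE := by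
  simp [layerEdges, layerCut]

theorem inl_inr_mem_layerEdges_sdiff :
    (Sum.inl u, Sum.inr v) ∈ layerEdges E \ layerCut SE SV ↔ u = v ∧ u ∉ SV := by
  simp +contextual [layerEdges, layerCut, eq_comm]

theorem inr_inl_notMem_layerEdges :
    (Sum.inr u, Sum.inl v) ∉ layerEdges E := by
  simp [layerEdges]

theorem exists_proc_of_lConnected {s t : V}
    (h : LConnected E (layerCut SE SV) (Sum.inl s) (Sum.inr t)) :
    ∃ w ∉ SV, Reach (E \ SE) s w ∧ Reach (E \ SE) w t := by
  suffices ∀ x, LConnected E (layerCut SE SV) (Sum.inl s) x → Sum.elim (Reach (E \ SE) s)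
      (fun v => ∃ w ∉ SV, Reach (E \ SE) s w ∧ Reach (E \ SE) w v) x from this _ h
  intro x hx
  induction hx with
  | refl => exact Relation.ReflTransGen.refl
  | @tail y z _ hstep ih =>
    rcases y with u | u <;> rcases z with v | v
    · exact ih.tail (inl_inl_mem_layerEdges_sdiff.1 hstep)
    · obtain ⟨rfl, hu⟩ := inl_inr_mem_layerEdges_sdiff.1 hstep
      exact ⟨u, hu, ih, Relation.ReflTransGen.refl⟩
    · exact absurd (mem_sdiff.1 hstep).1 inr_inl_notMem_layerEdges
    · obtain ⟨w, hw, hsw, hwu⟩ := ih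
      exact ⟨w, hw, hsw, hwu.tail (inr_inr_mem_layerEdges_sdiff.1 hstep)⟩

end LayerCut

theorem exists_compPath_of_reach {α : Type} {E E' : Finset (α × α)} (hE' : E' ⊆ E) {s w t : α}
    (hsw : Reach E' s w) (hwt : Reach E' w t) :
    ∃ p : CompPath E s t, p.proc = w ∧ ∀ e ∈ p.links, e ∈ E' := by
  obtain ⟨l, hs, ht, hchain, hw⟩ := List.exists_isChain_through_of_reflTransGen hsw hwt
  exact ⟨⟨l, w, List.ne_nil_of_mem hw, hs, ht, hchain.imp fun _ _ he => hE' he, hw⟩, rfl,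
    fun e he => hchain.rel_of_mem_zip_tail he⟩

theorem layered_cut_disconnects_general (E : Finset (V × V)) (s t : V)
    (SE : Finset (V × V)) (SV : Finset V)
    (hcut : ∀ p : CompPath E s t, (∃ e ∈ SE, e ∈ p.links) ∨ p.proc ∈ SV) :
    ¬ LConnected E
        ((SE.image fun e => (Sum.inl e.1, Sum.inl e.2)) ∪
          (SE.image fun e => (Sum.inr e.1, Sum.inr e.2)) ∪
          (SV.image fun w => (Sum.inl w, Sum.inr w)))
        (Sum.inl s) (Sum.inr t) := by
  intro h
  obtain ⟨w, hwSV, hsw, hwt⟩ := exists_proc_of_lConnected h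
  obtain ⟨p, rfl, hlinks⟩ := exists_compPath_of_reach sdiff_subset hsw hwt
  rcases hcut p with ⟨e, heSE, hep⟩ | hwSV'
  · exact (mem_sdiff.1 (hlinks e hep)).2 heSE
  · exact hwSV hwSV'

/-- If `(SE, SV)` is a joint communication and computation cut for
`(s, t)` (every computation path from `s` to `t` uses a link of `SE` or has its
computation node in `SV`), then deleting
`S' = {(u,v), (u',v') : (u,v) ∈ SE} ∪ {(w,w') : w ∈ SV}` from the layered graph
leaves no directed path from `s` (upper layer) to `t'` (lower layer). -/
theorem layered_cut_disconnects (E : Finset (V × V)) (μE : V × V → ℝ) (μV : V → ℝ)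
    (hμE : ∀ e, 0 ≤ μE e) (hμV : ∀ w, 0 ≤ μV w) (s t : V)
    (SE : Finset (V × V)) (SV : Finset V) (hSE : SE ⊆ E)
    (hcut : ∀ p : CompPath E s t, (∃ e ∈ SE, e ∈ p.links) ∨ p.proc ∈ SV) :
    ¬ LConnected E
        ((SE.image fun e => (Sum.inl e.1, Sum.inl e.2)) ∪
          (SE.image fun e => (Sum.inr e.1, Sum.inr e.2)) ∪
          (SV.image fun w => (Sum.inl w, Sum.inr w)))
        (Sum.inl s) (Sum.inr t) :=
  layered_cut_disconnects_general E s t SE SV hcut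
end

section
/- Let G = (V,E) be a distributed computing network and s,t ∈ V. Consider the modified layered graph of G, in which each of the two copies (u,v) and (u',v') of a link independently has capacity μ_{uv} and each crossing edge (w,w') has capacity μ_w. If C is any set of edges of the modified layered graph whose removal disconnects s from t', then the pair (E_c, V_c) with E_c = {(u,v) ∈ E : (u,v) ∈ C or (u',v') ∈ C} and V_c = {w ∈ V : (w,w') ∈ C} is a joint communication and computation cut for (s,t) whose value is at most the total capacity of C. Consequently, the minimum joint cut value of G is at most the minimum s–t' edge cut capacity of the modified layered graph. -/
open Finset

variable {V : Type} [Fintype V] [DecidableEq V]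

lemma chain'_zip_tail {α : Type*} {R : α → α → Prop} :
    ∀ l : List α, l.Chain' R → ∀ e ∈ l.zip l.tail, R e.1 e.2
  | [], _, e, he => by simp at he
  | [a], _, e, he => by simp at he
  | a :: b :: rest, h, e, he => by
    rw [List.Chain', List.isChain_cons_cons] at h
    simp only [List.tail_cons, List.zip_cons_cons, List.mem_cons] at he
    rcases he with rfl | he
    · exact h.1
    · exact chain'_zip_tail (b :: rest) h.2 e (by simpa using he)

lemma mem_layerEdges_inl {E : Finset (V × V)} {u v : V} (h : (u, v) ∈ E) :
    (Sum.inl u, Sum.inl v) ∈ layerEdges E := by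
  simp only [layerEdges, mem_union, mem_image]
  exact Or.inl (Or.inl ⟨(u, v), h, rfl⟩)

lemma mem_layerEdges_inr {E : Finset (V × V)} {u v : V} (h : (u, v) ∈ E) :
    (Sum.inr u, Sum.inr v) ∈ layerEdges E := by
  simp only [layerEdges, mem_union, mem_image]
  exact Or.inl (Or.inr ⟨(u, v), h, rfl⟩)

lemma mem_layerEdges_cross (E : Finset (V × V)) (w : V) :
    (Sum.inl w, Sum.inr w) ∈ layerEdges E := by
  simp only [layerEdges, mem_union, mem_image]
  exact Or.inr ⟨w, mem_univ w, rfl⟩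

lemma reach_upper (E : Finset (V × V)) (C : Finset ((V ⊕ V) × (V ⊕ V))) :
    ∀ l : List V, l.Chain' (fun u v => (u, v) ∈ E) →
      (∀ e ∈ l.zip l.tail, (Sum.inl e.1, Sum.inl e.2) ∉ C) →
      ∀ u w, l.head? = some u → w ∈ l → LConnected E C (Sum.inl u) (Sum.inl w)
  | [], _, _, u, w, hu, hw => by simp at hw
  | a :: rest, hch, hC, u, w, hu, hw => by
    simp only [List.head?_cons, Option.some.injEq] at hu
    subst hu
    rcases List.mem_cons.mp hw with rfl | hw
    · exact Relation.ReflTransGen.refl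
    · match rest, hw with
      | b :: rest', hw =>
        rw [List.Chain', List.isChain_cons_cons] at hch
        have hab : (Sum.inl a, Sum.inl b) ∉ C := by
          apply hC (a, b)
          simp
        have step : (Sum.inl a, Sum.inl b) ∈ layerEdges E \ C :=
          mem_sdiff.mpr ⟨mem_layerEdges_inl hch.1, hab⟩
        refine Relation.ReflTransGen.head step ?_
        refine reach_upper E C (b :: rest') hch.2 ?_ b w rfl hw
        intro e he
        exact hC e (by simpa using Or.inr he)

lemma reach_lower (E : Finset (V × V)) (C : Finset ((V ⊕ V) × (V ⊕ V))) :
    ∀ l : List V, l.Chain' (fun u v => (u, v) ∈ E) →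
      (∀ e ∈ l.zip l.tail, (Sum.inr e.1, Sum.inr e.2) ∉ C) →
      ∀ w v, w ∈ l → l.getLast? = some v → LConnected E C (Sum.inr w) (Sum.inr v)
  | [], _, _, w, v, hw, hv => by simp at hw
  | [a], _, _, w, v, hw, hv => by
    simp only [List.mem_singleton] at hw
    simp only [List.getLast?_singleton, Option.some.injEq] at hv
    subst hw; subst hv
    exact Relation.ReflTransGen.refl
  | a :: b :: rest, hch, hC, w, v, hw, hv => by
    rw [List.Chain', List.isChain_cons_cons] at hch
    have hv' : (b :: rest).getLast? = some v := by
      rw [← hv, List.getLast?_cons_cons]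
    have hCrest : ∀ e ∈ (b :: rest).zip (b :: rest).tail,
        (Sum.inr e.1, Sum.inr e.2) ∉ C := by
      intro e he
      exact hC e (by simpa using Or.inr he)
    rcases List.mem_cons.mp hw with rfl | hw
    · have hab : (Sum.inr w, Sum.inr b) ∉ C := by
        apply hC (w, b)
        simp
      have step : (Sum.inr w, Sum.inr b) ∈ layerEdges E \ C :=
        mem_sdiff.mpr ⟨mem_layerEdges_inr hch.1, hab⟩
      exact Relation.ReflTransGen.head step
        (reach_lower E C (b :: rest) hch.2 hCrest b v (by simp) hv')
    · exact reach_lower E C (b :: rest) hch.2 hCrest w v hw hv'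

lemma lcost_nonneg {μE : V × V → ℝ} {μV : V → ℝ} (hμE : ∀ e, 0 ≤ μE e)
    (hμV : ∀ w, 0 ≤ μV w) (q : (V ⊕ V) × (V ⊕ V)) : 0 ≤ lcost μE μV q := by
  rcases q with ⟨u | u, v | v⟩ <;> simp only [lcost] <;> first
    | exact hμE _
    | (split <;> simp [hμV, le_refl])
    | exact le_refl 0

/-- Key lemma: any layered-graph cut gives a joint cut of no larger value. -/
lemma layered_cut_key (E : Finset (V × V)) (μE : V × V → ℝ)
    (μV : V → ℝ) (hμE : ∀ e, 0 ≤ μE e) (hμV : ∀ w, 0 ≤ μV w) (s t : V)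
    (C : Finset ((V ⊕ V) × (V ⊕ V)))
    (hCdisc : ¬ LConnected E C (Sum.inl s) (Sum.inr t)) :
    IsJointCut E μV s t
        (E.filter fun e => (Sum.inl e.1, Sum.inl e.2) ∈ C ∨ (Sum.inr e.1, Sum.inr e.2) ∈ C)
        (univ.filter fun w => (Sum.inl w, Sum.inr w) ∈ C) ∧
      jointCutValue μE μV
          (E.filter fun e => (Sum.inl e.1, Sum.inl e.2) ∈ C ∨ (Sum.inr e.1, Sum.inr e.2) ∈ C)
          (univ.filter fun w => (Sum.inl w, Sum.inr w) ∈ C) ≤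
        ∑ q ∈ C, lcost μE μV q := by
  set Ec := E.filter fun e => (Sum.inl e.1, Sum.inl e.2) ∈ C ∨ (Sum.inr e.1, Sum.inr e.2) ∈ C
    with hEc
  set Vc := univ.filter fun w => (Sum.inl w, Sum.inr w) ∈ C with hVc
  constructor
  · refine ⟨filter_subset _ _, ?_⟩
    intro p _
    by_contra hcon
    push_neg at hcon
    obtain ⟨hnoE, hnoV⟩ := hcon
    apply hCdisc
    have hcross : (Sum.inl p.proc, Sum.inr p.proc) ∉ C := by
      intro hmem
      exact hnoV (mem_filter.mpr ⟨mem_univ _, hmem⟩)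
    have hlinkE : ∀ e ∈ p.walk.zip p.walk.tail, e ∈ E :=
      fun e he => chain'_zip_tail p.walk p.chain e he
    have hnotC : ∀ e ∈ p.walk.zip p.walk.tail,
        (Sum.inl e.1, Sum.inl e.2) ∉ C ∧ (Sum.inr e.1, Sum.inr e.2) ∉ C := by
      intro e he
      have hnmem : e ∉ Ec := fun hmem => hnoE e hmem he
      rw [hEc, mem_filter] at hnmem
      push_neg at hnmem
      exact hnmem (hlinkE e he)
    have h1 : LConnected E C (Sum.inl s) (Sum.inl p.proc) :=
      reach_upper E C p.walk p.chain (fun e he => (hnotC e he).1) s p.proc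
        p.head_eq p.proc_mem
    have h2 : LConnected E C (Sum.inr p.proc) (Sum.inr t) :=
      reach_lower E C p.walk p.chain (fun e he => (hnotC e he).2) p.proc t
        p.proc_mem p.last_eq
    have hstep : (Sum.inl p.proc, Sum.inr p.proc) ∈ layerEdges E \ C :=
      mem_sdiff.mpr ⟨mem_layerEdges_cross E p.proc, hcross⟩
    exact h1.trans (Relation.ReflTransGen.head hstep h2)
  · -- value bound
    set f : V × V → (V ⊕ V) × (V ⊕ V) := fun e =>
      if (Sum.inl e.1, Sum.inl e.2) ∈ C then (Sum.inl e.1, Sum.inl e.2)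
      else (Sum.inr e.1, Sum.inr e.2) with hf
    set g : V → (V ⊕ V) × (V ⊕ V) := fun w => (Sum.inl w, Sum.inr w) with hg
    have hfinj : Set.InjOn f Ec := by
      intro e he e' he' heq
      simp only [hf] at heq
      split at heq <;> split at heq <;>
        simp_all [Prod.ext_iff, Sum.inl.injEq, Sum.inr.injEq] <;>
        exact Prod.ext heq.1 heq.2
    have hginj : Set.InjOn g Vc := by
      intro w _ w' _ heq
      have := congrArg Prod.fst heq
      simpa [hg] using this
    have hsum1 : ∑ q ∈ Ec.image f, lcost μE μV q = ∑ e ∈ Ec, μE e := by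
      rw [Finset.sum_image hfinj]
      refine Finset.sum_congr rfl fun e _ => ?_
      simp only [hf]
      split <;> simp [lcost]
    have hsum2 : ∑ q ∈ Vc.image g, lcost μE μV q = ∑ w ∈ Vc, μV w := by
      rw [Finset.sum_image hginj]
      refine Finset.sum_congr rfl fun w _ => ?_
      simp [hg, lcost]
    have hdisj : Disjoint (Ec.image f) (Vc.image g) := by
      rw [Finset.disjoint_left]
      rintro q hq hq'
      obtain ⟨e, _, rfl⟩ := Finset.mem_image.mp hq
      obtain ⟨w, _, heq⟩ := Finset.mem_image.mp hq'
      simp only [hf, hg] at heq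
      split at heq <;> simp [Prod.ext_iff] at heq
    have hsub : Ec.image f ∪ Vc.image g ⊆ C := by
      intro q hq
      rcases Finset.mem_union.mp hq with hq | hq
      · obtain ⟨e, he, rfl⟩ := Finset.mem_image.mp hq
        rw [hEc, mem_filter] at he
        simp only [hf]
        split
        · assumption
        · tauto
      · obtain ⟨w, hw, rfl⟩ := Finset.mem_image.mp hq
        rw [hVc, mem_filter] at hw
        exact hw.2
    calc jointCutValue μE μV Ec Vc
        = ∑ q ∈ Ec.image f, lcost μE μV q + ∑ q ∈ Vc.image g, lcost μE μV q := by
          rw [hsum1, hsum2]; rfl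
      _ = ∑ q ∈ Ec.image f ∪ Vc.image g, lcost μE μV q :=
          (Finset.sum_union hdisj).symm
      _ ≤ ∑ q ∈ C, lcost μE μV q :=
          Finset.sum_le_sum_of_subset_of_nonneg hsub
            (fun q _ _ => lcost_nonneg hμE hμV q)

/-- If `C` is any set of edges of the modified layered graph (each
copy of a link `(u,v)` has capacity `μE (u,v)`, each crossing edge `(w,w')` has
capacity `μV w`) whose removal disconnects `s` from `t'`, then
`(E_c, V_c) = ({(u,v) ∈ E : (u,v) ∈ C or (u',v') ∈ C}, {w : (w,w') ∈ C})` is a joint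
communication and computation cut for `(s, t)` of value at most the total capacity of
`C`. Consequently, the minimum joint cut value is at most the minimum `s`–`t'` edge
cut capacity of the modified layered graph. -/
theorem layered_cut_gives_joint_cut (E : Finset (V × V)) (μE : V × V → ℝ)
    (μV : V → ℝ) (hμE : ∀ e, 0 ≤ μE e) (hμV : ∀ w, 0 ≤ μV w) (s t : V)
    (C : Finset ((V ⊕ V) × (V ⊕ V))) (hCsub : C ⊆ layerEdges E)
    (hCdisc : ¬ LConnected E C (Sum.inl s) (Sum.inr t)) :
    (IsJointCut E μV s t
        (E.filter fun e => (Sum.inl e.1, Sum.inl e.2) ∈ C ∨ (Sum.inr e.1, Sum.inr e.2) ∈ C)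
        (univ.filter fun w => (Sum.inl w, Sum.inr w) ∈ C) ∧
      jointCutValue μE μV
          (E.filter fun e => (Sum.inl e.1, Sum.inl e.2) ∈ C ∨ (Sum.inr e.1, Sum.inr e.2) ∈ C)
          (univ.filter fun w => (Sum.inl w, Sum.inr w) ∈ C) ≤
        ∑ q ∈ C, lcost μE μV q) ∧
      minJointCutValue E μE μV s t ≤
        sInf {x | ∃ C' : Finset ((V ⊕ V) × (V ⊕ V)), C' ⊆ layerEdges E ∧
          ¬ LConnected E C' (Sum.inl s) (Sum.inr t) ∧ x = ∑ q ∈ C', lcost μE μV q} := by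
  refine ⟨layered_cut_key E μE μV hμE hμV s t C hCdisc, ?_⟩
  have hfulldisc : ¬ LConnected E (layerEdges E) (Sum.inl s) (Sum.inr t) := by
    intro h
    rcases Relation.ReflTransGen.cases_head h with heq | ⟨c, hc, _⟩
    · exact absurd heq (by simp)
    · simp [sdiff_self] at hc
  have hbdd : ∀ c ∈ {c | ∃ Ec Vc, IsJointCut E μV s t Ec Vc ∧
      c = jointCutValue μE μV Ec Vc}, 0 ≤ c := by
    rintro c ⟨Ec, Vc, _, rfl⟩
    exact add_nonneg (Finset.sum_nonneg fun e _ => hμE e)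
      (Finset.sum_nonneg fun w _ => hμV w)
  refine le_csInf ⟨∑ q ∈ layerEdges E, lcost μE μV q,
    layerEdges E, subset_rfl, hfulldisc, rfl⟩ ?_
  rintro x ⟨C', _, hdisc', rfl⟩
  obtain ⟨hjc, hval⟩ := layered_cut_key E μE μV hμE hμV s t C' hdisc'
  refine le_trans (csInf_le ⟨0, hbdd⟩ ⟨_, _, hjc, rfl⟩) hval
end

section
/- Let G = (V,E) be a distributed computing network and s,t ∈ V. Suppose y assigns a value in {0,1} to every link (u,v) ∈ E and every node w ∈ V, and p assigns a real potential to every node of the layered graph of G, such that: p_v − p_u + y_{uv} ≥ 0 and p_{v'} − p_{u'} + y_{uv} ≥ 0 for every (u,v) ∈ E, p_{w'} − p_w + y_w ≥ 0 for every w ∈ V, and p_s − p_{t'} ≥ 1. Then the pair (E_c, V_c) with E_c = {(u,v) ∈ E : y_{uv} = 1} and V_c = {w ∈ V : y_w = 1} is a joint communication and computation cut for (s,t). -/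
open Finset

variable {V : Type} [Fintype V] [DecidableEq V]

/-! On an `s`–`t` computation path avoiding every link and node of value `1`, the potential
never decreases: along the walk from `s` to the processing node in the upper layer, across the
crossing edge there, and along the rest of the walk in the lower layer. Hence
`p s ≤ p t'`, contradicting `p s - p t' ≥ 1`. -/

namespace List

variable {α : Type*} {r : α → α → Prop}

theorem isChain_iff_forall_mem_zip_tail {l : List α} :
    l.IsChain r ↔ ∀ e ∈ l.zip l.tail, r e.1 e.2 := by
  induction l using List.twoStepInduction <;> simp_all

theorem IsChain.reflTransGen_of_head?_eq {l : List α} (hl : l.IsChain r) {a b : α}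
    (ha : l.head? = some a) (hb : b ∈ l) : Relation.ReflTransGen r a b :=
  hl.induction (Relation.ReflTransGen r a ·) l (fun _ _ hxy hax => hax.tail hxy)
    (fun hne => by rw [head?_eq_some_head hne, Option.some_inj] at ha; exact ha ▸ .refl) b hb

theorem IsChain.reflTransGen_of_getLast?_eq {l : List α} (hl : l.IsChain r) {a b : α}
    (hb : l.getLast? = some b) (ha : a ∈ l) : Relation.ReflTransGen r a b :=
  hl.backwards_induction (Relation.ReflTransGen r · b) l (fun _ _ hxy hyb => hyb.head hxy)
    (fun hne => by rw [getLast?_eq_some_getLast hne, Option.some_inj] at hb; exact hb ▸ .refl)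
    a ha

end List

section

variable {W : Type} {F : Finset (W × W)}

theorem Reach.apply_le_apply {β : Type*} [Preorder β] {f : W → β}
    (hf : ∀ e ∈ F, f e.1 ≤ f e.2) {a b : W} (hab : Reach F a b) : f a ≤ f b :=
  Relation.reflTransGen_le_of_le le_rfl _ _ (hab.lift f fun u v huv => hf (u, v) huv)

variable {E : Finset (W × W)} {s t : W}

theorem CompPath.mem_of_mem_links (q : CompPath E s t) {e : W × W} (he : e ∈ q.links) : e ∈ E :=
  List.isChain_iff_forall_mem_zip_tail.1 q.chain e he

theorem CompPath.reach_proc_of_links_subset (q : CompPath E s t) (hF : ∀ e ∈ q.links, e ∈ F) :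
    Reach F s q.proc ∧ Reach F q.proc t := by
  have hchain : q.walk.IsChain fun u v => (u, v) ∈ F :=
    List.isChain_iff_forall_mem_zip_tail.2 hF
  exact ⟨hchain.reflTransGen_of_head?_eq q.head_eq q.proc_mem,
    hchain.reflTransGen_of_getLast?_eq q.last_eq q.proc_mem⟩

end

open scoped Classical in
theorem potentials_give_joint_cut_general (E : Finset (V × V)) (μV : V → ℝ)
    (s t : V)
    (yE : V × V → ℝ) (yV : V → ℝ) (p : V ⊕ V → ℝ)
    (hyE : ∀ e ∈ E, yE e = 0 ∨ yE e = 1) (hyV : ∀ w : V, yV w = 0 ∨ yV w = 1)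
    (h₁ : ∀ e ∈ E, p (Sum.inl e.2) - p (Sum.inl e.1) + yE e ≥ 0)
    (h₂ : ∀ e ∈ E, p (Sum.inr e.2) - p (Sum.inr e.1) + yE e ≥ 0)
    (h₃ : ∀ w : V, p (Sum.inr w) - p (Sum.inl w) + yV w ≥ 0)
    (h₄ : p (Sum.inl s) - p (Sum.inr t) ≥ 1) :
    IsJointCut E μV s t (E.filter fun e => yE e = 1) (univ.filter fun w => yV w = 1) := by
  refine ⟨filter_subset _ _, fun q _ => ?_⟩
  by_contra! ⟨hlinks, hproc⟩
  set free := E.filter fun e => yE e = 0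
  have hfree : ∀ e ∈ q.links, e ∈ free := fun e he =>
    have heE := q.mem_of_mem_links he
    mem_filter.2 ⟨heE, (hyE e heE).resolve_right fun h => hlinks e (mem_filter.2 ⟨heE, h⟩) he⟩
  have hyproc : yV q.proc = 0 :=
    (hyV q.proc).resolve_right fun h => hproc (mem_filter.2 ⟨mem_univ _, h⟩)
  obtain ⟨hs, ht⟩ := q.reach_proc_of_links_subset hfree
  have upper : p (Sum.inl s) ≤ p (Sum.inl q.proc) :=
    hs.apply_le_apply (f := fun v => p (Sum.inl v)) fun e he => by
      obtain ⟨heE, hy⟩ := mem_filter.1 he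
      linarith [h₁ e heE]
  have lower : p (Sum.inr q.proc) ≤ p (Sum.inr t) :=
    ht.apply_le_apply (f := fun v => p (Sum.inr v)) fun e he => by
      obtain ⟨heE, hy⟩ := mem_filter.1 he
      linarith [h₂ e heE]
  linarith [h₃ q.proc]

open scoped Classical in
/-- If `y` assigns values in `{0, 1}` to links and nodes and `p`
assigns real potentials to the nodes of the layered graph satisfying
`p v − p u + y (u,v) ≥ 0` and `p v' − p u' + y (u,v) ≥ 0` for every link `(u,v)`,
`p w' − p w + y w ≥ 0` for every node `w`, and `p s − p t' ≥ 1`, then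
`({e ∈ E : y e = 1}, {w : y w = 1})` is a joint communication and computation cut
for `(s, t)`. -/
theorem potentials_give_joint_cut (E : Finset (V × V)) (μE : V × V → ℝ) (μV : V → ℝ)
    (hμE : ∀ e, 0 ≤ μE e) (hμV : ∀ w, 0 ≤ μV w) (s t : V)
    (yE : V × V → ℝ) (yV : V → ℝ) (p : V ⊕ V → ℝ)
    (hyE : ∀ e ∈ E, yE e = 0 ∨ yE e = 1) (hyV : ∀ w : V, yV w = 0 ∨ yV w = 1)
    (h₁ : ∀ e ∈ E, p (Sum.inl e.2) - p (Sum.inl e.1) + yE e ≥ 0)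
    (h₂ : ∀ e ∈ E, p (Sum.inr e.2) - p (Sum.inr e.1) + yE e ≥ 0)
    (h₃ : ∀ w : V, p (Sum.inr w) - p (Sum.inl w) + yV w ≥ 0)
    (h₄ : p (Sum.inl s) - p (Sum.inr t) ≥ 1) :
    IsJointCut E μV s t (E.filter fun e => yE e = 1) (univ.filter fun w => yV w = 1) :=
  potentials_give_joint_cut_general E μV s t yE yV p hyE hyV h₁ h₂ h₃ h₄
end

section
/- There exists a distributed computing network G and a pair of nodes s,t such that the minimum value of a joint communication and computation cut for (s,t) equals exactly twice the maximum s–t flow. Concretely, in the network with nodes {s, v, t}, links (s,t), (t,v), (v,s) each of transmission capacity 2, and v the unique computation node with processing capacity 2 (s and t have processing capacity 0), the maximum s–t flow equals 1 and the minimum joint cut value equals 2. Hence the factor 2 in the bound (minimum joint cut ≤ 2 × maximum flow) is tight. -/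
open Finset

variable {V : Type} [Fintype V] [DecidableEq V]

/-! ### Auxiliary material for the concrete triangle network -/

/-- The edge set of the triangle network. -/
def triE : Finset (Fin 3 × Fin 3) := {(0, 2), (2, 1), (1, 0)}

lemma mem_triE_iff : ∀ u v : Fin 3, (u, v) ∈ triE ↔ v = u - 1 := by decide

/-- In a list whose consecutive pairs follow the "subtract one" rule, the number of
occurrences of the link `(a, a-1)` equals the number of occurrences of `a` among all
but the last element. -/
lemma count_zip_eq (a : Fin 3) :
    ∀ l : List (Fin 3), l.Chain' (fun u v => v = u - 1) →
      (l.zip l.tail).count (a, a - 1) = l.dropLast.count a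
  | [], _ => rfl
  | [_], _ => rfl
  | x :: y :: t, h => by
    obtain ⟨hxy, h'⟩ := List.isChain_cons_cons.mp h
    have ih := count_zip_eq a (y :: t) h'
    have hzip : (x :: y :: t).zip (x :: y :: t).tail
        = (x, y) :: ((y :: t).zip (y :: t).tail) := rfl
    have hdl : (x :: y :: t).dropLast = x :: (y :: t).dropLast := rfl
    rw [hzip, hdl, List.count_cons, List.count_cons, ih]
    by_cases hx : x = a
    · subst hx
      simp [hxy]
    · have : ¬ ((x, y) = (a, a - 1)) := by
        intro hc
        exact hx (congrArg Prod.fst hc)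
      simp [hx, this]

/-- In a chain following the "subtract one" rule, every element other than the last
is followed (somewhere) by its successor. -/
lemma succ_mem (x : Fin 3) :
    ∀ l : List (Fin 3), l.Chain' (fun u v => v = u - 1) → x ∈ l →
      l.getLast? ≠ some x → (x - 1) ∈ l
  | [], _, hx, _ => absurd hx (by simp)
  | [y], _, hx, hl => by
    simp only [List.mem_singleton] at hx
    subst hx
    simp at hl
  | y :: z :: t, h, hx, hl => by
    obtain ⟨hyz, h'⟩ := List.isChain_cons_cons.mp h
    rcases List.mem_cons.mp hx with rfl | hx'
    · exact List.mem_cons.2 (Or.inr (hyz ▸ List.mem_cons_self (a := z) (l := t)))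
    · have hl' : (z :: t).getLast? ≠ some x := by
        rwa [List.getLast?_cons_cons] at hl
      exact List.mem_cons.2 (Or.inr (succ_mem x (z :: t) h' hx' hl'))

/-- Any walk from `0` to `2` in the triangle that visits `1` must use the link
`(0, 2)` at least twice. -/
lemma count_ge_two (w : List (Fin 3))
    (hh : w.head? = some 0) (hl : w.getLast? = some 2)
    (hc : w.Chain' (fun u v => v = u - 1)) (h1 : (1 : Fin 3) ∈ w) :
    2 ≤ (w.zip w.tail).count ((0 : Fin 3), (2 : Fin 3)) := by
  have h02 : ((0 : Fin 3), (2 : Fin 3)) = ((0 : Fin 3), (0 : Fin 3) - 1) := by decide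
  rw [h02, count_zip_eq 0 w hc]
  -- w = 0 :: tl with tl nonempty
  obtain ⟨hd, tl, rfl⟩ : ∃ hd tl, w = hd :: tl := by
    cases w with
    | nil => simp at hh
    | cons a l => exact ⟨a, l, rfl⟩
  have hhd : hd = 0 := by simpa using hh
  subst hhd
  have htl : tl ≠ [] := by
    intro hnil
    subst hnil
    simp at hl
  have hl' : tl.getLast? = some 2 := by
    obtain ⟨z, t, rfl⟩ : ∃ z t, tl = z :: t := by
      cases tl with
      | nil => exact absurd rfl htl
      | cons z t => exact ⟨z, t, rfl⟩
    rwa [List.getLast?_cons_cons] at hl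
  have h1tl : (1 : Fin 3) ∈ tl := by
    rcases List.mem_cons.mp h1 with h | h
    · exact absurd h (by decide)
    · exact h
  have h0tl : (0 : Fin 3) ∈ tl := by
    have := succ_mem 1 tl (List.isChain_cons.mp hc).2 h1tl
      (by rw [hl']; intro hc2; exact absurd (Option.some.inj hc2) (by decide))
    simpa using this
  -- count 0 in the full list is at least 2
  have hcount : 2 ≤ (0 :: tl : List (Fin 3)).count 0 := by
    rw [List.count_cons]
    have : 1 ≤ tl.count (0 : Fin 3) := List.one_le_count_iff.mpr h0tl
    simp only [beq_self_eq_true, if_true]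
    omega
  -- drop the last element, which is 2 ≠ 0
  have hne : (0 :: tl : List (Fin 3)) ≠ [] := by simp
  have hsplit := List.dropLast_concat_getLast hne
  have hgl : (0 :: tl : List (Fin 3)).getLast hne = 2 := by
    have := List.getLast?_eq_getLast hne
    rw [hl] at this
    exact (Option.some.inj this).symm
  calc 2 ≤ (0 :: tl : List (Fin 3)).count 0 := hcount
    _ = (0 :: tl : List (Fin 3)).dropLast.count 0 := by
        conv_lhs => rw [← hsplit]
        rw [List.count_append, hgl]
        simp

/-- The canonical computation path `0 → 2 → 1 → 0 → 2` with processing at `1`. -/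
def p₁ : CompPath triE 0 2 where
  walk := [0, 2, 1, 0, 2]
  proc := 1
  walk_ne := by simp
  head_eq := rfl
  last_eq := rfl
  chain := by simp [triE, List.Chain', List.isChain_cons_cons]
  proc_mem := by decide

lemma p₁_links : p₁.links = [(0, 2), (2, 1), (1, 0), (0, 2)] := rfl

/-- In the network with nodes `{s, v, t}` (here `s = 0`, `v = 1`,
`t = 2`), links `(s,t), (t,v), (v,s)` each of transmission capacity `2`, and `v` the
unique computation node with processing capacity `2`, the maximum `s`–`t` flow equals
`1` while the minimum joint communication and computation cut value equals `2`.
Hence the factor `2` in `min joint cut ≤ 2 · max flow` is tight. -/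
theorem joint_cut_gap_tight :
    maxFlow ({(0, 2), (2, 1), (1, 0)} : Finset (Fin 3 × Fin 3))
        (fun _ => 2) (fun w => if w = 1 then 2 else 0) 0 2 = 1 ∧
      minJointCutValue ({(0, 2), (2, 1), (1, 0)} : Finset (Fin 3 × Fin 3))
        (fun _ => 2) (fun w => if w = 1 then 2 else 0) 0 2 = 2 := by
  constructor
  · -- the max-flow part
    unfold maxFlow
    have hsupp : (Finsupp.single p₁ (1 : ℝ)).support = {p₁} :=
      Finsupp.support_single_ne_zero _ one_ne_zero
    have hflow : IsFlow triE (fun _ => 2) (fun w => if w = 1 then 2 else 0) 0 2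
        (Finsupp.single p₁ 1) := by
      refine ⟨?_, ?_, ?_⟩
      · intro p
        classical
        rw [Finsupp.single_apply]
        split <;> norm_num
      · intro e he
        rw [hsupp, Finset.sum_singleton, Finsupp.single_eq_same, one_mul]
        have h : ∀ e : Fin 3 × Fin 3, p₁.links.count e ≤ 2 := by
          rw [p₁_links]; decide
        show ((p₁.links.count e : ℕ) : ℝ) ≤ 2
        exact_mod_cast h e
      · intro w
        rw [hsupp, Finset.sum_singleton, Finsupp.single_eq_same]
        have : p₁.proc = 1 := rfl
        show (if p₁.proc = w then (1:ℝ) else 0) ≤ if w = 1 then 2 else 0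
        by_cases hw : w = 1 <;> simp [hw, this, eq_comm]
    have hval : flowValue triE 0 2 (Finsupp.single p₁ 1) = 1 := by
      rw [flowValue, hsupp, Finset.sum_singleton, Finsupp.single_eq_same]
    have hmem : (1 : ℝ) ∈ {F | ∃ x, IsFlow triE (fun _ => 2)
        (fun w => if w = 1 then 2 else 0) 0 2 x ∧ F = flowValue triE 0 2 x} :=
      ⟨_, hflow, hval.symm⟩
    have hub : ∀ F ∈ {F | ∃ x, IsFlow triE (fun _ => 2)
        (fun w => if w = 1 then 2 else 0) 0 2 x ∧ F = flowValue triE 0 2 x}, F ≤ 1 := by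
      rintro F ⟨x, ⟨hpos, hEc, hVc⟩, rfl⟩
      have hproc : ∀ p ∈ x.support, p.proc = 1 := by
        intro p hp
        by_contra hne
        have hxp : 0 < x p := (hpos p).lt_of_ne' (Finsupp.mem_support_iff.mp hp)
        have hsum : (∑ q ∈ x.support, if q.proc = p.proc then x q else 0) ≤ 0 := by
          simpa [hne] using hVc p.proc
        have hle : x p ≤ ∑ q ∈ x.support, (if q.proc = p.proc then x q else 0) := by
          have := Finset.single_le_sum
            (f := fun q : CompPath triE 0 2 => if q.proc = p.proc then x q else 0)
            (fun q _ => by split; exacts [hpos q, le_rfl]) hp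
          simpa using this
        linarith
      have hcnt : ∀ p ∈ x.support,
          (2 : ℝ) ≤ (p.links.count ((0 : Fin 3), (2 : Fin 3)) : ℝ) := by
        intro p hp
        have h1 : (1 : Fin 3) ∈ p.walk := hproc p hp ▸ p.proc_mem
        have hc : p.walk.Chain' (fun u v => v = u - 1) :=
          p.chain.imp fun {a b} h => (mem_triE_iff a b).mp h
        exact_mod_cast count_ge_two p.walk p.head_eq p.last_eq hc h1
      have h02 := hEc (0, 2) (by decide)
      have key : ∑ p ∈ x.support, x p * 2 ≤ 2 := by
        refine le_trans (Finset.sum_le_sum fun p hp => ?_) h02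
        exact mul_le_mul_of_nonneg_left (hcnt p hp) (hpos p)
      rw [← Finset.sum_mul] at key
      unfold flowValue
      linarith
    exact le_antisymm (csSup_le ⟨1, hmem⟩ hub) (le_csSup ⟨1, hub⟩ hmem)
  · -- the min-cut part
    unfold minJointCutValue
    have hmem : (2 : ℝ) ∈ {c | ∃ Ec Vc,
        IsJointCut triE (fun w => if w = 1 then 2 else 0) 0 2 Ec Vc ∧
          c = jointCutValue (fun _ => 2) (fun w => if w = 1 then 2 else 0) Ec Vc} := by
      refine ⟨∅, {1}, ⟨Finset.empty_subset _, ?_⟩, ?_⟩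
      · intro p hp
        right
        rw [Finset.mem_singleton]
        by_contra h1
        simp [h1] at hp
      · simp [jointCutValue]
    have hlb : ∀ c ∈ {c | ∃ Ec Vc,
        IsJointCut triE (fun w => if w = 1 then 2 else 0) 0 2 Ec Vc ∧
          c = jointCutValue (fun _ => 2) (fun w => if w = 1 then 2 else 0) Ec Vc},
        2 ≤ c := by
      rintro c ⟨Ec, Vc, ⟨hsub, hcut⟩, rfl⟩
      have hVnn : (0 : ℝ) ≤ ∑ w ∈ Vc, (if w = 1 then (2 : ℝ) else 0) :=
        Finset.sum_nonneg fun w _ => by split <;> norm_num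
      have hEnn : (0 : ℝ) ≤ ∑ _e ∈ Ec, (2 : ℝ) :=
        Finset.sum_nonneg fun _ _ => by norm_num
      unfold jointCutValue
      rcases Finset.eq_empty_or_nonempty Ec with rfl | ⟨e, he⟩
      · have hp₁ := hcut p₁ (by norm_num [show p₁.proc = 1 from rfl])
        rcases hp₁ with ⟨e, he, _⟩ | hmem1
        · exact absurd he (by simp)
        · have h1 : (2 : ℝ) ≤ ∑ w ∈ Vc, (if w = 1 then (2 : ℝ) else 0) := by
            have := Finset.single_le_sum
              (f := fun w : Fin 3 => if w = 1 then (2 : ℝ) else 0)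
              (fun w _ => by split <;> norm_num) hmem1
            simpa [show p₁.proc = 1 from rfl] using this
          simpa using h1
      · have h2 : (2 : ℝ) ≤ ∑ _e ∈ Ec, (2 : ℝ) :=
          Finset.single_le_sum (f := fun _ : Fin 3 × Fin 3 => (2 : ℝ))
            (fun _ _ => by norm_num) he
        linarith
    exact le_antisymm (csInf_le ⟨2, hlb⟩ hmem) (le_csInf ⟨2, hmem⟩ hlb)
end
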